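/- For every positive integer n, the number of staircase tableaux of size n that contain no symbol δ equals the double factorial (2n+1)!! = 1·3·5⋯(2n+1). -/

import Mathlib

inductive SLetter : Type
  | A | B | G | D
deriving DecidableEq, Repr

instance : Fintype SLetter where
  elems := {SLetter.A, SLetter.B, SLetter.G, SLetter.D}
  complete := fun x => by cases x <;> simp

/-- A filling `T` of the staircase Young diagram of shape `(n, n-1, …, 1)`
(boxes `(i,j)` with `i + j < n`, row `i` from the top, column `j` from the left,
diagonal boxes those with `i + j + 1 = n`) is a staircase tableau if:
boxes outside the shape are unused (empty); no diagonal box is empty;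
all boxes to the left of a `β` or `δ` in its row are empty;
all boxes above an `α` or `γ` in its column are empty. -/
def IsStaircase (n : ℕ) (T : Fin n → Fin n → Option SLetter) : Prop :=
  (∀ i j : Fin n, n ≤ (i : ℕ) + (j : ℕ) → T i j = none) ∧
  (∀ i j : Fin n, (i : ℕ) + (j : ℕ) + 1 = n → T i j ≠ none) ∧
  (∀ i j j' : Fin n, j' < j → (T i j = some SLetter.B ∨ T i j = some SLetter.D) →
      T i j' = none) ∧
  (∀ i i' j : Fin n, i' < i → (T i j = some SLetter.A ∨ T i j = some SLetter.G) →
      T i' j = none)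

instance (n : ℕ) : DecidablePred (IsStaircase n) := fun T => by
  unfold IsStaircase; infer_instance

/-- The staircase tableaux of size `n`. -/
def StaircaseTableau (n : ℕ) : Type :=
  {T : Fin n → Fin n → Option SLetter // IsStaircase n T}

instance (n : ℕ) : Fintype (StaircaseTableau n) := Subtype.fintype _

instance (n : ℕ) : DecidableEq (StaircaseTableau n) := Subtype.instDecidableEq

/-- The number of boxes of `T` filled with the symbol `x`. -/
def countLetter (n : ℕ) (T : Fin n → Fin n → Option SLetter) (x : SLetter) : ℕ :=
  (Finset.univ.filter (fun p : Fin n × Fin n => T p.1 p.2 = some x)).card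

/-- The label of the nearest labeled box strictly to the right of `(i,j)` in row `i`. -/
def rightLabel (n : ℕ) (T : Fin n → Fin n → Option SLetter) (i j : Fin n) : Option SLetter :=
  List.findSome? (fun j' => T i j') ((List.finRange n).drop ((j : ℕ) + 1))

/-- The label of the nearest labeled box strictly below `(i,j)` in column `j`. -/
def belowLabel (n : ℕ) (T : Fin n → Fin n → Option SLetter) (i j : Fin n) : Option SLetter :=
  List.findSome? (fun i' => T i' j) ((List.finRange n).drop ((i : ℕ) + 1))

/-- Whether the (empty) box `(i,j)` receives a `q` in the weight of `T`:
an empty box seeing a `δ` to its right gets `q`; an empty box seeing an `α` or `γ` to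
its right and a `β` or `γ` below it gets `q`; all other (empty) boxes get `1`. -/
def boxQ (n : ℕ) (T : Fin n → Fin n → Option SLetter) (i j : Fin n) : Bool :=
  match T i j with
  | some _ => false
  | none =>
    match rightLabel n T i j, belowLabel n T i j with
    | some SLetter.D, _ => true
    | some SLetter.A, some SLetter.B => true
    | some SLetter.A, some SLetter.G => true
    | some SLetter.G, some SLetter.B => true
    | some SLetter.G, some SLetter.G => true
    | _, _ => false

/-- The exponent of `q` in the weight of `T`. -/
def qCount (n : ℕ) (T : Fin n → Fin n → Option SLetter) : ℕ :=
  (Finset.univ.filter (fun p : Fin n × Fin n => boxQ n T p.1 p.2 = true)).card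

/-- The type of `T`, as a word in `Fin n → Bool`, read off the diagonal boxes from
northeast (index `0`) to southwest (index `n-1`): `true` (a `•`) for each `α` or `δ`,
`false` (a `∘`) for each `β` or `γ`. -/
def typeWord (n : ℕ) (T : Fin n → Fin n → Option SLetter) : Fin n → Bool := fun i =>
  match T i ⟨n - 1 - (i : ℕ), by have := i.isLt; omega⟩ with
  | some SLetter.A => true
  | some SLetter.D => true
  | _ => false

/-- `t(T)`, the number of `•`'s in the type of `T`. -/
def bulletCount (n : ℕ) (T : Fin n → Fin n → Option SLetter) : ℕ :=
  (Finset.univ.filter (fun i : Fin n => typeWord n T i = true)).card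

/-- The weight of a staircase tableau: the product of all its labels, with each empty
box contributing `q` or `1` according to the rules (`u` is set to `1`). -/
def stWt {R : Type*} [CommSemiring R] (n : ℕ) (a b g d q : R)
    (T : Fin n → Fin n → Option SLetter) : R :=
  a ^ countLetter n T SLetter.A * b ^ countLetter n T SLetter.B *
    g ^ countLetter n T SLetter.G * d ^ countLetter n T SLetter.D * q ^ qCount n T

/-- The fugacity partition function `Z_n(y; α, β, γ, δ; q) = Σ_T wt(T) y^{t(T)}`,
summed over all staircase tableaux of size `n`. -/
def stZ (R : Type*) [CommSemiring R] (n : ℕ) (y a b g d q : R) : R :=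
  ∑ T : StaircaseTableau n, stWt n a b g d q T.val * y ^ bulletCount n T.val

/-- The generating polynomial `Z_σ(α, β, γ, δ; q)` of staircase tableaux of a given
type `σ` (encoded as a list of booleans, `true` = `•`, `false` = `∘`). -/
def stZw (R : Type*) [CommSemiring R] (w : List Bool) (a b g d q : R) : R :=
  ∑ T ∈ Finset.univ.filter
      (fun T : StaircaseTableau w.length => List.ofFn (typeWord w.length T.val) = w),
    stWt w.length a b g d q T.val

/-!
Weight a δ-free staircase tableau by `v ^ (number of rows containing no β)`. Deleting the first
column of a tableau of size `m + 1` leaves one of size `m`, and the first columns that can be put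
back depend only on the set `F` of its rows without β (the bottom row, emptied by the deletion,
included): labels may sit only in rows of `F`, the diagonal box is labelled, the topmost label
is α, β or γ and all labels below it are β. Summing over the row of the topmost label gives
`(2v + 1) (v + 1) ^ (#F - 1)` for the column, so the weighted count satisfies
`Z (m + 1) v = (2v + 1) Z m (v + 1)`, whence `Z n v = ∏ j < n, (2 (v + j) + 1)`; at `v = 1` this
is `(2n + 1)!!`.
-/

open Finset

theorem sum_pow_card_filter_lt_mul_succ_pow_card_filter_gt {R α : Type*} [CommSemiring R]
    [LinearOrder α] (v : R) (s : Finset α) :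
    ∑ p ∈ s, v ^ #(s.filter (· < p)) * (v + 1) ^ #(s.filter (p < ·)) + v ^ #s =
      (v + 1) ^ #s := by
  induction s using Finset.induction_on_max with
  | empty => simp
  | insert a s has ih =>
    have ha : a ∉ s := fun h => lt_irrefl a (has a h)
    have hlt : ∀ p ∈ s, (insert a s).filter (· < p) = s.filter (· < p) := fun p hp => by
      rw [filter_insert, if_neg (has p hp).not_gt]
    have hgt : ∀ p ∈ s, #((insert a s).filter (p < ·)) = #(s.filter (p < ·)) + 1 :=
      fun p hp => by
      rw [filter_insert, if_pos (has p hp), card_insert_of_notMem (by simp [ha])]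
    have hlt_a : (insert a s).filter (· < a) = s := by
      rw [filter_insert, if_neg (lt_irrefl a), filter_true_of_mem has]
    have hgt_a : (insert a s).filter (a < ·) = ∅ := by
      rw [filter_insert, if_neg (lt_irrefl a), filter_false_of_mem fun p hp => (has p hp).not_gt]
    rw [sum_insert ha, hlt_a, hgt_a, sum_congr rfl fun p hp => by rw [hlt p hp, hgt p hp],
      card_insert_of_notMem ha, pow_succ (v + 1) #s, ← ih]
    simp only [card_empty, pow_zero, mul_one, pow_succ, ← mul_assoc, ← sum_mul]
    ring

section AdmissibleColumn

variable {ι : Type*} [Fintype ι] [LinearOrder ι] [OrderTop ι] {F : Finset ι}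

/-- The possible first columns of a δ-free staircase tableau whose other columns leave exactly the
rows in `F` without β; row `⊤` holds the diagonal box. -/
def IsAdmissibleColumn (F : Finset ι) (c : ι → Option SLetter) : Prop :=
  c ⊤ ≠ none ∧ (∀ i, c i ≠ none → i ∈ F) ∧
    (∀ i i', i' < i → (c i = some .A ∨ c i = some .G) → c i' = none) ∧
    ∀ i, c i ≠ some .D

instance (F : Finset ι) : DecidablePred (IsAdmissibleColumn F) := fun c => by
  unfold IsAdmissibleColumn; infer_instance

def columnBoxes (F : Finset ι) (p i : ι) : Finset (Option SLetter) :=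
  if i < p then {none}
  else if i = p then {some .A, some .B, some .G}
  else if i = ⊤ then {some .B}
  else if i ∈ F then {none, some .B}
  else {none}

theorem sum_piFinset_columnBoxes {R : Type*} [CommSemiring R] (v : R) {p : ι}
    (hp : p ∈ F) :
    ∑ c ∈ Fintype.piFinset (columnBoxes F p), v ^ #(F.filter (c · ≠ some .B)) =
      (2 * v + 1) * v ^ #(F.filter (· < p)) *
        (v + 1) ^ #(F.filter (fun i => p < i ∧ i ≠ ⊤)) := by
  have hrow : ∀ i, ∑ x ∈ columnBoxes F p i, (if i ∈ F ∧ x ≠ some .B then v else 1) =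
      (if i = p then 2 * v + 1 else 1) * (if i ∈ F ∧ i < p then v else 1) *
        (if i ∈ F ∧ p < i ∧ i ≠ ⊤ then v + 1 else 1) := by
    intro i
    rcases lt_trichotomy i p with h | rfl | h
    · by_cases hi : i ∈ F <;> simp [columnBoxes, h, h.ne, h.not_gt, hi]
    · simp [columnBoxes, hp, two_mul, add_assoc, add_comm]
    · by_cases ht : i = ⊤
      · subst ht
        simp [columnBoxes, h.ne', h.not_gt]
      · by_cases hi : i ∈ F <;> simp [columnBoxes, h, h.ne', h.not_gt, ht, hi]
  have hprod : ∀ (P : ι → Prop) [DecidablePred P] (a : R),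
      ∏ i, (if P i then a else 1) = a ^ #(univ.filter P) := fun P _ a => by
    rw [← prod_filter, prod_const]
  have hF : ∀ (P : ι → Prop) [DecidablePred P],
      F.filter P = univ.filter (fun i => i ∈ F ∧ P i) :=
    fun P _ => by ext; simp
  calc ∑ c ∈ Fintype.piFinset (columnBoxes F p), v ^ #(F.filter (c · ≠ some .B))
      _ = ∑ c ∈ Fintype.piFinset (columnBoxes F p),
          ∏ i, (if i ∈ F ∧ c i ≠ some .B then v else 1) := by
          refine sum_congr rfl fun c _ => ?_
          rw [hF, hprod]
      _ = ∏ i, ∑ x ∈ columnBoxes F p i, (if i ∈ F ∧ x ≠ some .B then v else 1) :=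
        (prod_univ_sum (columnBoxes F p) fun i x => if i ∈ F ∧ x ≠ some .B then v else 1).symm
      _ = _ := by
        rw [prod_congr rfl fun i _ => hrow i, prod_mul_distrib, prod_mul_distrib,
          Fintype.prod_ite_eq', hprod, hprod, hF, hF]

theorem isAdmissibleColumn_iff (hF : ⊤ ∈ F) (c : ι → Option SLetter) :
    IsAdmissibleColumn F c ↔ ∃ p ∈ F, ∀ i, c i ∈ columnBoxes F p i := by
  constructor
  · rintro ⟨htop, hF, hAG, hD⟩
    obtain ⟨p, hp, hmin⟩ :=
      (univ.filter (c · ≠ none)).exists_min_image id ⟨⊤, by simpa using htop⟩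
    simp only [mem_filter, mem_univ, true_and, id] at hp hmin
    refine ⟨p, hF p hp, fun i => ?_⟩
    rcases lt_trichotomy i p with h | rfl | h
    · have : c i = none := by_contra fun hi => (hmin i hi).not_gt h
      simp [columnBoxes, h, this]
    · obtain ⟨x, hx⟩ := Option.ne_none_iff_exists'.1 hp
      have := hD i
      cases x <;> simp_all [columnBoxes]
    · rcases hci : c i with _ | x
      · have : i ≠ ⊤ := by rintro rfl; exact htop hci
        simp only [columnBoxes, h.not_gt, h.ne', this, if_false]
        split_ifs <;> simp
      · have hx : x = .B := by
          cases x
          · exact absurd (hAG i p h (.inl hci)) hp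
          · rfl
          · exact absurd (hAG i p h (.inr hci)) hp
          · exact absurd hci (hD i)
        have hi : i ∈ F := hF i (by simp [hci])
        by_cases ht : i = ⊤
        · subst ht
          simp [columnBoxes, h.ne', hx]
        · simp [columnBoxes, h.not_gt, h.ne', ht, hi, hx]
  · rintro ⟨p, hp, hc⟩
    have hbox : ∀ i, ∀ x ∈ columnBoxes F p i,
        x ≠ some .D ∧ (x ≠ none → p ≤ i ∧ i ∈ F) ∧
        (x = some .A ∨ x = some .G → i = p) ∧ (i = ⊤ → x ≠ none) := by
      intro i x hx
      unfold columnBoxes at hx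
      split_ifs at hx with h1 h2 h3 h4 <;> simp only [mem_insert, mem_singleton] at hx <;>
        subst_vars
      · simp [h1.ne_top]
      · rcases hx with rfl | rfl | rfl <;> simp [hp]
      · simp [hF]
      · rcases hx with rfl | rfl <;> simp [h3, h4, not_lt.1 h1]
      · simp [h3]
    refine ⟨(hbox ⊤ _ (hc ⊤)).2.2.2 rfl, fun i hi => ((hbox i _ (hc i)).2.1 hi).2,
      fun i i' hlt hAG => ?_, fun i => (hbox i _ (hc i)).1⟩
    obtain rfl := (hbox i _ (hc i)).2.2.1 hAG
    by_contra hi'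
    exact hlt.not_ge ((hbox i' _ (hc i')).2.1 hi').1

theorem pairwiseDisjoint_piFinset_columnBoxes :
    (F : Set ι).PairwiseDisjoint (fun p => Fintype.piFinset (columnBoxes F p)) := by
  have key : ∀ p q, p < q → Disjoint (Fintype.piFinset (columnBoxes F p))
      (Fintype.piFinset (columnBoxes F q)) := fun p q hpq => by
    refine disjoint_left.2 fun c hp hq => ?_
    have hcp := Fintype.mem_piFinset.1 hp p
    have hcq := Fintype.mem_piFinset.1 hq p
    simp only [columnBoxes, lt_irrefl, if_false, if_true, hpq, mem_singleton] at hcp hcq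
    simp [hcq] at hcp
  intro p _ q _ hpq
  rcases hpq.lt_or_gt with h | h
  · exact key p q h
  · exact (key q p h).symm

theorem sum_admissibleColumns {R : Type*} [CommSemiring R] (v : R) (hF : ⊤ ∈ F) :
    ∑ c ∈ univ.filter (IsAdmissibleColumn F), v ^ #(F.filter (c · ≠ some .B)) =
      (2 * v + 1) * (v + 1) ^ (#F - 1) := by
  have hcols : univ.filter (IsAdmissibleColumn F) =
      F.biUnion fun p => Fintype.piFinset (columnBoxes F p) := by
    ext c
    simp [isAdmissibleColumn_iff hF]
  set G := F.erase ⊤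
  have hlt : ∀ p ∈ G, F.filter (· < p) = G.filter (· < p) := fun p hp => by
    ext i
    simp only [G, mem_filter, mem_erase]
    exact ⟨fun h => ⟨⟨h.2.ne_top, h.1⟩, h.2⟩, fun h => ⟨h.1.2, h.2⟩⟩
  have hgt : ∀ p, F.filter (fun i => p < i ∧ i ≠ ⊤) = G.filter (p < ·) := fun p => by
    ext i
    simp only [G, mem_filter, mem_erase]
    tauto
  have hlt_top : F.filter (· < ⊤) = G := by
    ext i
    simp [G, lt_top_iff_ne_top, and_comm]
  have htop_lt : G.filter (⊤ < ·) = ∅ := filter_false_of_mem fun i _ => not_top_lt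
  rw [hcols, sum_biUnion pairwiseDisjoint_piFinset_columnBoxes,
    sum_congr rfl fun p hp => sum_piFinset_columnBoxes v hp, ← insert_erase hF,
    sum_insert (notMem_erase ⊤ F), insert_erase hF, hlt_top, hgt, htop_lt]
  rw [sum_congr rfl fun p hp => by rw [hlt p hp, hgt p], ← card_erase_of_mem hF,
    ← sum_pow_card_filter_lt_mul_succ_pow_card_filter_gt v G, card_empty, pow_zero]
  simp_rw [mul_assoc, ← mul_sum]
  ring

end AdmissibleColumn

abbrev Filling (n : ℕ) := Fin n → Fin n → Option SLetter

def noDeltaTableaux (n : ℕ) : Finset (Filling n) :=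
  univ.filter fun T => IsStaircase n T ∧ ∀ i j, T i j ≠ some .D

def betaFreeRows {r c : ℕ} (T : Fin r → Fin c → Option SLetter) : Finset (Fin r) :=
  univ.filter fun i => ∀ j, T i j ≠ some .B

section FirstColumn

variable {m : ℕ}

def addEmptyRow (T : Filling m) : Fin (m + 1) → Fin m → Option SLetter :=
  Fin.snoc T fun _ => none

def addFirstColumn (c : Fin (m + 1) → Option SLetter) (T : Filling m) : Filling (m + 1) :=
  fun i => Fin.cons (c i) (addEmptyRow T i)

@[simp] theorem addEmptyRow_castSucc (T : Filling m) (i : Fin m) : addEmptyRow T i.castSucc = T i :=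
  Fin.snoc_castSucc ..

@[simp] theorem addEmptyRow_last (T : Filling m) (j : Fin m) :
    addEmptyRow T (Fin.last m) j = none := by
  simp [addEmptyRow]

@[simp] theorem addFirstColumn_zero (c : Fin (m + 1) → Option SLetter) (T : Filling m)
    (i : Fin (m + 1)) :
    addFirstColumn c T i 0 = c i := rfl

@[simp] theorem addFirstColumn_succ (c : Fin (m + 1) → Option SLetter) (T : Filling m)
    (i : Fin (m + 1)) (j : Fin m) :
    addFirstColumn c T i j.succ = addEmptyRow T i j := rfl

theorem card_betaFreeRows_addEmptyRow (T : Filling m) :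
    #(betaFreeRows (addEmptyRow T)) = #(betaFreeRows T) + 1 := by
  simp only [betaFreeRows, card_filter, Fin.sum_univ_castSucc, addEmptyRow_castSucc,
    addEmptyRow_last]
  simp

theorem betaFreeRows_addFirstColumn (c : Fin (m + 1) → Option SLetter) (T : Filling m) :
    betaFreeRows (addFirstColumn c T) =
      (betaFreeRows (addEmptyRow T)).filter (c · ≠ some .B) := by
  ext i
  simp [betaFreeRows, Fin.forall_fin_succ, and_comm]

theorem mem_noDeltaTableaux_of_addFirstColumn {c : Fin (m + 1) → Option SLetter} {T : Filling m}
    (h : addFirstColumn c T ∈ noDeltaTableaux (m + 1)) :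
    T ∈ noDeltaTableaux m ∧ IsAdmissibleColumn (betaFreeRows (addEmptyRow T)) c := by
  simp only [noDeltaTableaux, mem_filter, mem_univ, true_and] at h ⊢
  obtain ⟨⟨hout, hdiag, hrow, hcol⟩, hD⟩ := h
  refine ⟨⟨⟨fun i j h => ?_, fun i j h => ?_, fun i j j' h hBD => ?_,
      fun i i' j h hAG => ?_⟩, fun i j => ?_⟩,
    ?_, fun i hi => ?_, fun i i' h hAG => ?_, fun i => hD i 0⟩
  · simpa using hout i.castSucc j.succ (by simp only [Fin.val_succ, Fin.val_castSucc]; omega)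
  · simpa using hdiag i.castSucc j.succ (by simp only [Fin.val_succ, Fin.val_castSucc]; omega)
  · simpa using hrow i.castSucc j.succ j'.succ (by simpa) (by simpa)
  · simpa using hcol i.castSucc i'.castSucc j.succ (by simpa) (by simpa)
  · simpa using hD i.castSucc j.succ
  · simpa [Fin.top_eq_last] using hdiag (Fin.last m) 0 (by simp)
  · simp only [betaFreeRows, mem_filter, mem_univ, true_and]
    intro j hB
    exact hi (by simpa using hrow i j.succ 0 (Fin.succ_pos j) (.inl (by simpa)))
  · simpa using hcol i i' 0 h (by simpa)

theorem isStaircase_addFirstColumn {c : Fin (m + 1) → Option SLetter} {T : Filling m}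
    (hT : IsStaircase m T) (hD : ∀ i j, T i j ≠ some .D)
    (hc : IsAdmissibleColumn (betaFreeRows (addEmptyRow T)) c) :
    IsStaircase (m + 1) (addFirstColumn c T) := by
  obtain ⟨hout, hdiag, hrow, hcol⟩ := hT
  obtain ⟨hlast, hsupp, hAG, -⟩ := hc
  refine ⟨fun i j h => ?_, fun i j h => ?_, fun i j j' h hBD => ?_, fun i i' j h hAG' => ?_⟩
  · induction j using Fin.cases with
    | zero => simp only [Fin.val_zero] at h; omega
    | succ j =>
      induction i using Fin.lastCases with
      | last => simp
      | cast i => simpa using hout i j (by simp only [Fin.val_succ, Fin.val_castSucc] at h; omega)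
  · induction j using Fin.cases with
    | zero =>
      obtain rfl : i = Fin.last m :=
        Fin.ext (by simp only [Fin.val_zero, Fin.val_last] at h ⊢; omega)
      simpa [Fin.top_eq_last] using hlast
    | succ j =>
      induction i using Fin.lastCases with
      | last => simp at h
      | cast i => simpa using hdiag i j (by simp only [Fin.val_succ, Fin.val_castSucc] at h; omega)
  · induction j using Fin.cases with
    | zero => exact absurd h (Fin.not_lt_zero j')
    | succ j =>
      induction i using Fin.lastCases with
      | last => simp at hBD
      | cast i =>
        have hB : T i j = some .B := by simpa [hD i j] using hBD
        induction j' using Fin.cases with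
        | zero =>
          by_contra hne
          have := hsupp _ hne
          simp only [betaFreeRows, mem_filter, mem_univ, true_and, addEmptyRow_castSucc] at this
          exact this j hB
        | succ j' => simpa using hrow i j j' (by simpa using h) (.inl hB)
  · induction j using Fin.cases with
    | zero => exact hAG i i' h hAG'
    | succ j =>
      induction i using Fin.lastCases with
      | last => simp at hAG'
      | cast i =>
        induction i' using Fin.lastCases with
        | last => exact absurd h (Fin.castSucc_lt_last i).not_gt
        | cast i' => simpa using hcol i i' j (by simpa using h) (by simpa using hAG')

theorem addFirstColumn_mem_noDeltaTableaux {c : Fin (m + 1) → Option SLetter} {T : Filling m}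
    (hT : T ∈ noDeltaTableaux m) (hc : IsAdmissibleColumn (betaFreeRows (addEmptyRow T)) c) :
    addFirstColumn c T ∈ noDeltaTableaux (m + 1) := by
  simp only [noDeltaTableaux, mem_filter, mem_univ, true_and] at hT ⊢
  refine ⟨isStaircase_addFirstColumn hT.1 hT.2 hc, fun i j => ?_⟩
  induction j using Fin.cases with
  | zero => exact hc.2.2.2 i
  | succ j =>
    induction i using Fin.lastCases with
    | last => simp
    | cast i => simpa using hT.2 i j

theorem addFirstColumn_mem_noDeltaTableaux_iff (c : Fin (m + 1) → Option SLetter)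
    (T : Filling m) :
    addFirstColumn c T ∈ noDeltaTableaux (m + 1) ↔
      T ∈ noDeltaTableaux m ∧ IsAdmissibleColumn (betaFreeRows (addEmptyRow T)) c :=
  ⟨mem_noDeltaTableaux_of_addFirstColumn, fun h => addFirstColumn_mem_noDeltaTableaux h.1 h.2⟩

def removeFirstColumn (T : Filling (m + 1)) : Filling m := fun i j => T i.castSucc j.succ

theorem addFirstColumn_removeFirstColumn {T : Filling (m + 1)}
    (hT : T ∈ noDeltaTableaux (m + 1)) :
    addFirstColumn (T · 0) (removeFirstColumn T) = T := by
  funext i j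
  induction j using Fin.cases with
  | zero => rfl
  | succ j =>
    induction i using Fin.lastCases with
    | last =>
      simp only [addFirstColumn_succ, addEmptyRow_last]
      exact ((mem_filter.1 hT).2.1.1 _ _ (by simp)).symm
    | cast i => simp [removeFirstColumn]

@[simp] theorem removeFirstColumn_addFirstColumn (c : Fin (m + 1) → Option SLetter)
    (T : Filling m) :
    removeFirstColumn (addFirstColumn c T) = T := by
  funext i j
  simp [removeFirstColumn]

theorem sum_noDeltaTableaux_pow_card_betaFreeRows_succ (v : ℕ) :
    ∑ T ∈ noDeltaTableaux (m + 1), v ^ #(betaFreeRows T) =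
      (2 * v + 1) * ∑ T ∈ noDeltaTableaux m, (v + 1) ^ #(betaFreeRows T) := by
  calc ∑ T ∈ noDeltaTableaux (m + 1), v ^ #(betaFreeRows T)
      _ = ∑ x ∈ (noDeltaTableaux m).sigma
            (fun T => univ.filter (IsAdmissibleColumn (betaFreeRows (addEmptyRow T)))),
          v ^ #(betaFreeRows (addFirstColumn x.2 x.1)) := by
        refine sum_nbij' (fun T => ⟨removeFirstColumn T, (T · 0)⟩)
          (fun x => addFirstColumn x.2 x.1)
          (fun T hT => ?_) (fun x hx => ?_) (fun T hT => ?_) (fun x hx => ?_) (fun T hT => ?_)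
        · rw [← addFirstColumn_removeFirstColumn hT,
            addFirstColumn_mem_noDeltaTableaux_iff] at hT
          simpa using hT
        · rw [mem_sigma, mem_filter] at hx
          exact (addFirstColumn_mem_noDeltaTableaux_iff _ _).2 ⟨hx.1, hx.2.2⟩
        · exact addFirstColumn_removeFirstColumn hT
        · simp
        · rw [addFirstColumn_removeFirstColumn hT]
      _ = ∑ T ∈ noDeltaTableaux m,
          ∑ c ∈ univ.filter (IsAdmissibleColumn (betaFreeRows (addEmptyRow T))),
          v ^ #((betaFreeRows (addEmptyRow T)).filter (c · ≠ some .B)) := by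
        rw [sum_sigma]
        simp_rw [betaFreeRows_addFirstColumn]
      _ = ∑ T ∈ noDeltaTableaux m,
          (2 * v + 1) * (v + 1) ^ (#(betaFreeRows (addEmptyRow T)) - 1) :=
        sum_congr rfl fun T _ => sum_admissibleColumns v (by simp [betaFreeRows, Fin.top_eq_last])
      _ = _ := by simp [card_betaFreeRows_addEmptyRow, mul_sum]

end FirstColumn

theorem sum_noDeltaTableaux_pow_card_betaFreeRows (n v : ℕ) :
    ∑ T ∈ noDeltaTableaux n, v ^ #(betaFreeRows T) = ∏ j ∈ range n, (2 * (v + j) + 1) := by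
  induction n generalizing v with
  | zero => simp [noDeltaTableaux, IsStaircase, betaFreeRows]
  | succ n ih =>
    rw [sum_noDeltaTableaux_pow_card_betaFreeRows_succ, ih, prod_range_succ']
    simp [add_assoc, add_comm 1, mul_comm]

theorem countLetter_eq_zero_iff {n : ℕ} {T : Filling n} {x : SLetter} :
    countLetter n T x = 0 ↔ ∀ i j, T i j ≠ some x := by
  simp [countLetter, filter_eq_empty_iff]

theorem card_filter_countLetter_D_eq_zero (n : ℕ) :
    #(univ.filter fun T : StaircaseTableau n => countLetter n T.val .D = 0) =
      #(noDeltaTableaux n) := by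
  refine card_bij (fun T _ => T.val) (fun T hT => ?_) (fun _ _ _ _ h => Subtype.ext h)
    (fun T hT => ?_)
  · simp only [mem_filter, mem_univ, true_and, countLetter_eq_zero_iff] at hT
    exact mem_filter.2 ⟨mem_univ _, T.2, hT⟩
  · obtain ⟨hS, hD⟩ := (mem_filter.1 hT).2
    exact ⟨⟨T, hS⟩, mem_filter.2 ⟨mem_univ _, countLetter_eq_zero_iff.2 hD⟩, rfl⟩

theorem card_staircaseTableau_no_delta_general (n : ℕ) :
    (Finset.univ.filter
        (fun T : StaircaseTableau n => countLetter n T.val SLetter.D = 0)).card =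
      ∏ j ∈ Finset.range (n + 1), (2 * j + 1) := by
  rw [card_filter_countLetter_D_eq_zero, card_eq_sum_ones]
  simpa [prod_range_succ', add_comm 1] using sum_noDeltaTableaux_pow_card_betaFreeRows n 1

/-- For every positive integer `n`, the number of staircase tableaux of size `n`
containing no symbol `δ` equals the double factorial `(2n+1)!! = 1·3·5⋯(2n+1)`. -/
theorem card_staircaseTableau_no_delta (n : ℕ) (hn : 1 ≤ n) :
    (Finset.univ.filter
        (fun T : StaircaseTableau n => countLetter n T.val SLetter.D = 0)).card =
      ∏ j ∈ Finset.range (n + 1), (2 * j + 1) :=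
  card_staircaseTableau_no_delta_general n
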